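/- arXiv:2211.02173 — 6 statements merged into one kernel-verified Lean document; each statement's English description precedes it below -/
import Mathlib

section
/- Σ₀ + S ⊆ Σ₁, where + denotes the Minkowski sum {a + s : a ∈ Σ₀, s ∈ S}. -/
open MeasureTheory Topology
open scoped Pointwise ENNReal InnerProductSpace

/-! Given `a ∈ Λ₀` and `s ∈ S`, truncate an approximate eigenvector of `H_x` at `a` to a finite
window `F`. With positive probability the potential `ω` is uniformly close to `s` on `F`, and then
the truncated vector is an approximate eigenvector of `H_{x,ω}` at `a + s`. For self-adjoint
operators approximate eigenvalues are close to the spectrum, so `a + s` is close to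
`σ(H_{x,ω}) = Λ₁`, which is closed. -/

theorem ContinuousLinearMap.neg_algebraMap_add_apply {𝕜 E : Type*} [NormedField 𝕜]
    [NormedAddCommGroup E] [NormedSpace 𝕜 E] (B : E →L[𝕜] E) (z : 𝕜) (ψ : E) :
    (-algebraMap 𝕜 (E →L[𝕜] E) z + B) ψ = B ψ - z • ψ := by
  simp [Algebra.algebraMap_eq_smul_one, neg_add_eq_sub]

namespace IsSelfAdjoint

section RCLike

variable {𝕜 E : Type*} [RCLike 𝕜] [NormedAddCommGroup E] [InnerProductSpace 𝕜 E] [CompleteSpace E]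
  {B : E →L[𝕜] E}

theorem exists_norm_apply_le_of_zero_mem_spectrum (hB : IsSelfAdjoint B)
    (h0 : (0 : 𝕜) ∈ spectrum 𝕜 B) {ε : ℝ} (hε : 0 < ε) :
    ∃ ψ : E, ψ ≠ 0 ∧ ‖B ψ‖ ≤ ε * ‖ψ‖ := by
  by_contra! hbelow
  -- `⟪B (B x), x⟫ = ‖B x‖ ^ 2`, so `B * B` is coercive, hence invertible, and then so is `B`.
  have hsq : IsUnit (B * B) := by
    refine ContinuousLinearMap.isUnit_of_forall_le_norm_inner_map _
      (c := (ε ^ 2).toNNReal) (by positivity) fun x ↦ ?_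
    rcases eq_or_ne x 0 with rfl | hx
    · simp
    have hinner : ⟪(B * B) x, x⟫_𝕜 = (‖B x‖ ^ 2 : ℝ) := by
      rw [mul_apply_eq_comp, ← ContinuousLinearMap.adjoint_inner_right, hB.adjoint_eq,
        inner_self_eq_norm_sq_to_K]
      norm_cast
    rw [hinner, RCLike.norm_ofReal, Real.coe_toNNReal _ (by positivity),
      abs_of_nonneg (by positivity)]
    calc ‖x‖ ^ 2 * ε ^ 2 = (ε * ‖x‖) ^ 2 := by ring
      _ ≤ ‖B x‖ ^ 2 := by gcongr; exact (hbelow x hx).le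
  exact spectrum.zero_mem_iff 𝕜 |>.mp h0 ((Commute.refl B).isUnit_mul_iff.mp hsq).1

theorem exists_mem_spectrum_norm_le (hB : IsSelfAdjoint B) {ψ : E} (hψ : ψ ≠ 0) {ε : ℝ}
    (h : ‖B ψ‖ ≤ ε * ‖ψ‖) : ∃ t ∈ spectrum 𝕜 B, ‖t‖ ≤ ε := by
  by_cases hunit : IsUnit B
  swap
  · have hε : 0 ≤ ε := nonneg_of_mul_nonneg_left ((norm_nonneg _).trans h) (norm_pos_iff.mpr hψ)
    exact ⟨0, spectrum.zero_mem_iff 𝕜 |>.mpr hunit, by simpa using hε⟩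
  obtain ⟨U, rfl⟩ := hunit
  set V : E →L[𝕜] E := ↑U⁻¹ with hV
  have hinv : IsSelfAdjoint V := by
    have hU : star U = U := Units.ext hB
    rw [IsSelfAdjoint, hV, ← Units.coe_star_inv, hU]
  have hnorm : 1 ≤ ‖V‖ * ε := by
    have hψV : ‖ψ‖ ≤ ‖V‖ * (ε * ‖ψ‖) := calc
      ‖ψ‖ = ‖V ((U : E →L[𝕜] E) ψ)‖ := by
          rw [hV, ← mul_apply_eq_comp, Units.inv_mul, one_apply_eq_self]
      _ ≤ ‖V‖ * (ε * ‖ψ‖) := (V.le_opNorm _).trans (by gcongr)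
    nlinarith [norm_pos_iff.mpr hψ]
  -- `U⁻¹` is self-adjoint, so its spectral radius is its norm `≥ ε⁻¹`; invert a spectral value
  -- of maximal modulus.
  have hradius := ContinuousLinearMap.spectralRadius_eq_nnnorm _ hinv
  have hVpos : 0 < ‖V‖ := (norm_nonneg V).lt_of_ne fun hV0 ↦ by
    rw [← hV0, zero_mul] at hnorm
    exact one_pos.not_ge hnorm
  have hne : (spectrum 𝕜 V).Nonempty := by
    by_contra! hempty
    simp [spectralRadius, hempty, eq_comm (a := (0 : ℝ≥0∞))] at hradius
    simp [hradius] at hVpos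
  obtain ⟨k, hk, hknorm⟩ := spectrum.exists_nnnorm_eq_spectralRadius_of_nonempty hne
  rw [hradius, ENNReal.coe_inj] at hknorm
  have hk0 : k ≠ 0 := spectrum.ne_zero_of_mem_of_unit hk
  refine ⟨k⁻¹, ?_, ?_⟩
  · simpa using (spectrum.inv_mem_iff (r := Units.mk0 k⁻¹ (inv_ne_zero hk0)) (a := U)).mpr
      (by simpa using hk)
  · have : ‖k‖ = ‖V‖ := congrArg NNReal.toReal hknorm
    rw [norm_inv, this]
    exact (inv_le_iff_one_le_mul₀' hVpos).mpr hnorm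

end RCLike

section Real

variable {F : Type*} [NormedAddCommGroup F] [InnerProductSpace ℝ F] [CompleteSpace F]
  {B : F →L[ℝ] F}

theorem exists_norm_sub_smul_le_of_mem_spectrum (hB : IsSelfAdjoint B) {z : ℝ}
    (hz : z ∈ spectrum ℝ B) {ε : ℝ} (hε : 0 < ε) :
    ∃ ψ : F, ψ ≠ 0 ∧ ‖B ψ - z • ψ‖ ≤ ε * ‖ψ‖ := by
  have hshift : IsSelfAdjoint (-algebraMap ℝ (F →L[ℝ] F) z + B) :=
    ((IsSelfAdjoint.all z).algebraMap (F →L[ℝ] F)).neg.add hB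
  have h0 := (spectrum.add_mem_iff (r := 0) (s := z) (a := B)).mp (by rwa [zero_add])
  obtain ⟨ψ, hψ, hψε⟩ := hshift.exists_norm_apply_le_of_zero_mem_spectrum h0 hε
  exact ⟨ψ, hψ, by rwa [B.neg_algebraMap_add_apply] at hψε⟩

theorem exists_mem_spectrum_dist_le (hB : IsSelfAdjoint B) {z : ℝ} {ψ : F} (hψ : ψ ≠ 0)
    {ε : ℝ} (h : ‖B ψ - z • ψ‖ ≤ ε * ‖ψ‖) : ∃ t ∈ spectrum ℝ B, dist t z ≤ ε := by
  have hshift : IsSelfAdjoint (-algebraMap ℝ (F →L[ℝ] F) z + B) :=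
    ((IsSelfAdjoint.all z).algebraMap (F →L[ℝ] F)).neg.add hB
  obtain ⟨t, ht, htε⟩ :=
    hshift.exists_mem_spectrum_norm_le hψ (by rwa [B.neg_algebraMap_add_apply])
  exact ⟨t + z, spectrum.add_mem_iff.mpr ht, by simpa using htε⟩

end Real

end IsSelfAdjoint

namespace lp

theorem exists_finite_support_mem_of_isOpen {α : Type*} {E : α → Type*}
    [∀ i, NormedAddCommGroup (E i)] {p : ℝ≥0∞} [Fact (1 ≤ p)] (hp : p ≠ ⊤) {U : Set (lp E p)}
    (hU : IsOpen U) {ψ : lp E p} (hψ : ψ ∈ U) :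
    ∃ (s : Finset α) (φ : lp E p), φ ∈ U ∧ ∀ i ∉ s, φ i = 0 := by
  classical
  obtain ⟨s, hs⟩ := ((lp.hasSum_single hp ψ).eventually (hU.mem_nhds hψ)).exists
  refine ⟨s, _, hs, fun i hi ↦ ?_⟩
  rw [lp.coeFn_sum, Finset.sum_apply]
  exact Finset.sum_eq_zero fun j hj ↦ lp.single_apply_ne p j _ (ne_of_mem_of_not_mem hj hi).symm

theorem norm_le_add_of_apply_eq_add_mul {ι : Type*} {p : ℝ≥0∞} [Fact (1 ≤ p)]
    {g g' φ : lp (fun _ : ι ↦ ℝ) p} {v : ι → ℝ} {η : ℝ} (hη : 0 ≤ η)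
    (h : ∀ i, g' i = g i + v i * φ i) (hv : ∀ i, φ i ≠ 0 → |v i| ≤ η) :
    ‖g'‖ ≤ ‖g‖ + η * ‖φ‖ := by
  have hp : p ≠ 0 := (zero_lt_one.trans_le Fact.out).ne'
  have hdiff : ‖g' - g‖ ≤ η * ‖φ‖ := by
    rw [← Real.norm_of_nonneg hη, ← norm_smul]
    refine lp.norm_mono hp fun i ↦ ?_
    rcases eq_or_ne (φ i) 0 with hi | hi
    · simp [h i, hi]
    · simp only [coeFn_sub, coeFn_smul, Pi.sub_apply, Pi.smul_apply, h i, smul_eq_mul,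
        add_sub_cancel_left, Real.norm_eq_abs, abs_mul, abs_of_nonneg hη]
      gcongr
      exact hv i hi
  calc ‖g'‖ = ‖g + (g' - g)‖ := by rw [add_sub_cancel]
    _ ≤ ‖g‖ + η * ‖φ‖ := (norm_add_le _ _).trans (by gcongr)

end lp

section ProductMeasure

variable {ι α : Type*} [MeasurableSpace α] {ν : Measure α} {ν' : Measure (ι → α)}

theorem measure_setOf_forall_mem_ne_zero
    (hν' : ∀ (F : Finset ι) (t : ι → Set α), (∀ i, MeasurableSet (t i)) →
      ν' {ω | ∀ i ∈ F, ω i ∈ t i} = ∏ i ∈ F, ν (t i))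
    (F : Finset ι) {U : Set α} (hU : MeasurableSet U) (h : ν U ≠ 0) :
    ν' {ω | ∀ i ∈ F, ω i ∈ U} ≠ 0 := by
  rw [hν' F (fun _ ↦ U) (fun _ ↦ hU), Finset.prod_ne_zero_iff]
  exact fun _ _ ↦ h

theorem ae_forall_apply_mem [Countable ι]
    (hν' : ∀ (F : Finset ι) (t : ι → Set α), (∀ i, MeasurableSet (t i)) →
      ν' {ω | ∀ i ∈ F, ω i ∈ t i} = ∏ i ∈ F, ν (t i))
    {S : Set α} (hS : MeasurableSet S) (h : ν Sᶜ = 0) : ∀ᵐ ω ∂ν', ∀ i, ω i ∈ S := by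
  refine ae_all_iff.mpr fun i ↦ ae_iff.mpr ?_
  have := hν' {i} (fun _ ↦ Sᶜ) fun _ ↦ hS.compl
  simpa [h] using this

end ProductMeasure

theorem sum_subset_perturbed_spectrum_general
    {X : Type*} [MetricSpace X]
    [MeasurableSpace X]
    -- `T` is a homeomorphism of `X`
    (T : X ≃ₜ X)
    -- `μ` is an ergodic Borel probability measure with full topological support
    (μ : Measure X) [IsProbabilityMeasure μ]
    -- the continuous sampling function
    (f : C(X, ℝ))
    -- the unperturbed Schrödinger operators `H_x` on `ℓ²(ℤ)`
    (H : X → (lp (fun _ : ℤ => ℝ) 2 →L[ℝ] lp (fun _ : ℤ => ℝ) 2))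
    (hH : ∀ (x : X) (ψ : lp (fun _ : ℤ => ℝ) 2) (n : ℤ),
      (H x ψ) n = ψ (n + 1) + ψ (n - 1) + f ((T.toEquiv ^ n) x) * ψ n)
    (hHsa : ∀ x, IsSelfAdjoint (H x))
    -- the unperturbed almost sure spectrum `Λ₀`
    (Λ₀ : Set ℝ)
    (hΛ₀ : ∀ᵐ x ∂μ, spectrum ℝ (H x) = Λ₀)
    -- the single-site measure `ν` with compact support `S` containing at least two points
    (ν : Measure ℝ)
    (S : Set ℝ) (hS : S = {v : ℝ | ∀ U ∈ 𝓝 v, ν U ≠ 0})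
    -- `ν'` is the product measure `ν^ℤ` on `ℝ^ℤ`
    (ν' : Measure (ℤ → ℝ)) [IsProbabilityMeasure ν']
    (hν' : ∀ (F : Finset ℤ) (t : ℤ → Set ℝ), (∀ i, MeasurableSet (t i)) →
      ν' {ω | ∀ i ∈ F, ω i ∈ t i} = ∏ i ∈ F, ν (t i))
    -- the perturbed Schrödinger operators `H_{x,ω}` on `ℓ²(ℤ)`
    (H' : X → (ℤ → ℝ) → (lp (fun _ : ℤ => ℝ) 2 →L[ℝ] lp (fun _ : ℤ => ℝ) 2))
    (hH' : ∀ (x : X) (ω : ℤ → ℝ), (∀ n, ω n ∈ S) →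
      ∀ (ψ : lp (fun _ : ℤ => ℝ) 2) (n : ℤ),
        (H' x ω ψ) n = ψ (n + 1) + ψ (n - 1) + (f ((T.toEquiv ^ n) x) + ω n) * ψ n)
    (hH'sa : ∀ x ω, (∀ n, ω n ∈ S) → IsSelfAdjoint (H' x ω))
    -- the perturbed almost sure spectrum `Λ₁`
    (Λ₁ : Set ℝ) (hΛ₁compact : IsCompact Λ₁)
    (hΛ₁ : ∀ᵐ p ∂(μ.prod ν'), spectrum ℝ (H' p.1 p.2) = Λ₁) :
    Λ₀ + S ⊆ Λ₁ := by
  rintro _ ⟨a, ha, s, hs, rfl⟩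
  have hS_support : S = ν.support := by
    ext v
    simp [hS, Measure.mem_support_iff_forall, pos_iff_ne_zero]
  obtain ⟨x, hx₀, hx₁⟩ := (hΛ₀.and (Measure.ae_ae_of_ae_prod hΛ₁)).exists
  have hgood : ∀ᵐ ω ∂ν', (∀ n, ω n ∈ S) ∧ spectrum ℝ (H' x ω) = Λ₁ :=
    (ae_forall_apply_mem hν' (hS_support ▸ Measure.isClosed_support).measurableSet
      (hS_support ▸ Measure.measure_compl_support)).and hx₁
  rw [← hΛ₁compact.isClosed.closure_eq, Metric.mem_closure_iff]
  intro ε hε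
  set η := ε / 4 with hη
  have hηpos : 0 < η := by positivity
  -- an approximate eigenvector of `H x` at `a`, truncated to a finite set `F`
  obtain ⟨ψ, hψ0, hψ⟩ := (hHsa x).exists_norm_sub_smul_le_of_mem_spectrum (hx₀ ▸ ha) hηpos
  obtain ⟨F, φ, hφ : ‖H x φ - a • φ‖ < 2 * η * ‖φ‖, hφF⟩ :=
    lp.exists_finite_support_mem_of_isOpen ENNReal.ofNat_ne_top
      (U := {φ | ‖H x φ - a • φ‖ < 2 * η * ‖φ‖}) (isOpen_lt (by fun_prop) (by fun_prop))
      (ψ := ψ) (show ‖H x ψ - a • ψ‖ < 2 * η * ‖ψ‖ by nlinarith [norm_pos_iff.mpr hψ0])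
  have hφ0 : φ ≠ 0 := by rintro rfl; simp at hφ
  -- a potential which is `η`-close to `s` on `F`
  obtain ⟨ω, hωF, hωS, hω⟩ := Measure.exists_mem_of_measure_ne_zero_of_ae
    (measure_setOf_forall_mem_ne_zero hν' F measurableSet_ball
      ((Measure.mem_support_iff_forall s).mp (hS_support ▸ hs) _
        (Metric.ball_mem_nhds s hηpos)).ne') (ae_restrict_of_ae hgood)
  have hpert : ‖H' x ω φ - (a + s) • φ‖ ≤ ‖H x φ - a • φ‖ + η * ‖φ‖ :=
    lp.norm_le_add_of_apply_eq_add_mul (v := fun n ↦ ω n - s) hηpos.le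
      (fun n ↦ by
        simp only [lp.coeFn_sub, lp.coeFn_smul, Pi.sub_apply, Pi.smul_apply, smul_eq_mul, hH,
          hH' x ω hωS]
        ring)
      (fun n hn ↦ (Metric.mem_ball.mp (hωF n (by by_contra h; exact hn (hφF n h)))).le)
  obtain ⟨t, ht, htdist⟩ := (hH'sa x ω hωS).exists_mem_spectrum_dist_le hφ0
    (ε := 3 * η) (by linarith [hφ.le])
  exact ⟨t, hω ▸ ht, by rw [dist_comm]; linarith⟩

/-- In the setting of an ergodic Schrödinger operator with an Anderson-type
random perturbation, the Minkowski sum `Λ₀ + S` of the unperturbed almost sure spectrum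
and the support of the single-site measure is contained in the perturbed almost sure
spectrum `Λ₁`. -/
theorem sum_subset_perturbed_spectrum
    {X : Type*} [MetricSpace X] [CompactSpace X] [Nonempty X]
    [MeasurableSpace X] [BorelSpace X]
    -- `T` is a homeomorphism of `X`
    (T : X ≃ₜ X)
    -- `μ` is an ergodic Borel probability measure with full topological support
    (μ : Measure X) [IsProbabilityMeasure μ]
    (hT : Ergodic T μ)
    (hfull : ∀ U : Set X, IsOpen U → U.Nonempty → μ U ≠ 0)
    -- the continuous sampling function
    (f : C(X, ℝ))
    -- the unperturbed Schrödinger operators `H_x` on `ℓ²(ℤ)`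
    (H : X → (lp (fun _ : ℤ => ℝ) 2 →L[ℝ] lp (fun _ : ℤ => ℝ) 2))
    (hH : ∀ (x : X) (ψ : lp (fun _ : ℤ => ℝ) 2) (n : ℤ),
      (H x ψ) n = ψ (n + 1) + ψ (n - 1) + f ((T.toEquiv ^ n) x) * ψ n)
    (hHsa : ∀ x, IsSelfAdjoint (H x))
    -- the unperturbed almost sure spectrum `Λ₀`
    (Λ₀ : Set ℝ) (hΛ₀compact : IsCompact Λ₀)
    (hΛ₀ : ∀ᵐ x ∂μ, spectrum ℝ (H x) = Λ₀)
    -- the single-site measure `ν` with compact support `S` containing at least two points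
    (ν : Measure ℝ) [IsProbabilityMeasure ν]
    (S : Set ℝ) (hS : S = {v : ℝ | ∀ U ∈ 𝓝 v, ν U ≠ 0})
    (hScompact : IsCompact S) (hStwo : S.Nontrivial)
    -- `ν'` is the product measure `ν^ℤ` on `ℝ^ℤ`
    (ν' : Measure (ℤ → ℝ)) [IsProbabilityMeasure ν']
    (hν' : ∀ (F : Finset ℤ) (t : ℤ → Set ℝ), (∀ i, MeasurableSet (t i)) →
      ν' {ω | ∀ i ∈ F, ω i ∈ t i} = ∏ i ∈ F, ν (t i))
    -- the perturbed Schrödinger operators `H_{x,ω}` on `ℓ²(ℤ)`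
    (H' : X → (ℤ → ℝ) → (lp (fun _ : ℤ => ℝ) 2 →L[ℝ] lp (fun _ : ℤ => ℝ) 2))
    (hH' : ∀ (x : X) (ω : ℤ → ℝ), (∀ n, ω n ∈ S) →
      ∀ (ψ : lp (fun _ : ℤ => ℝ) 2) (n : ℤ),
        (H' x ω ψ) n = ψ (n + 1) + ψ (n - 1) + (f ((T.toEquiv ^ n) x) + ω n) * ψ n)
    (hH'sa : ∀ x ω, (∀ n, ω n ∈ S) → IsSelfAdjoint (H' x ω))
    -- the perturbed almost sure spectrum `Λ₁`
    (Λ₁ : Set ℝ) (hΛ₁compact : IsCompact Λ₁)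
    (hΛ₁ : ∀ᵐ p ∂(μ.prod ν'), spectrum ℝ (H' p.1 p.2) = Λ₁) :
    Λ₀ + S ⊆ Λ₁ :=
  sum_subset_perturbed_spectrum_general T μ f H hH hHsa Λ₀ hΛ₀ ν S hS ν' hν' H' hH' hH'sa Λ₁
    hΛ₁compact hΛ₁
end

section
/- Let E ∈ ℝ and suppose the cocycle (T, A_E) is uniformly hyperbolic. Then any stable section d^s of (T, A_E) and any unstable section d^u of (T, A_E) satisfy d^s(x) ≠ d^u(x) for all x ∈ X and are homotopic as maps X → ℝP¹. -/
open Topology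

noncomputable section

/-- The real projective line, as the projectivization of `ℝ²`. -/
abbrev RP1 : Type := Projectivization ℝ (Fin 2 → ℝ)

instance : TopologicalSpace RP1 :=
  inferInstanceAs (TopologicalSpace (Quotient (projectivizationSetoid ℝ (Fin 2 → ℝ))))

abbrev SL2 : Type := Matrix.SpecialLinearGroup (Fin 2) ℝ

/-- The action of `SL(2,ℝ)` on `ℝP¹`: `A · span v = span (A v)`. -/
def SL2act (A : SL2) (p : RP1) : RP1 :=
  Projectivization.map ((A : Matrix (Fin 2) (Fin 2) ℝ).mulVecLin)
    (by
      rw [Matrix.coe_mulVecLin]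
      exact Matrix.mulVec_injective_iff_isUnit.2
        ((Matrix.isUnit_iff_isUnit_det _).2 (by simp))) p

/-- The Schrödinger cocycle matrix `A_E(x)`. -/
def schrodingerCocycle {X : Type*} (f : X → ℝ) (E : ℝ) (x : X) : SL2 :=
  ⟨!![E - f x, -1; 1, 0], by simp [Matrix.det_fin_two_of]⟩

/-- Iterates `A^n(x) = A(T^{n-1}x) ⋯ A(x)` for `n ∈ ℕ`. -/
def cocIterN {X : Type*} (T : X → X) (A : X → SL2) : ℕ → X → SL2
  | 0, _ => 1
  | n + 1, x => A (T^[n] x) * cocIterN T A n x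

/-- Iterates `A^n(x)` for `n ∈ ℤ`, with `A^{-n}(x) = (A^n(T^{-n}x))⁻¹`. -/
def cocIterZ {X : Type*} [TopologicalSpace X] (T : X ≃ₜ X) (A : X → SL2) (n : ℤ) (x : X) : SL2 :=
  if 0 ≤ n then cocIterN T A n.toNat x
  else (cocIterN T A (-n).toNat ((⇑T.symm)^[(-n).toNat] x))⁻¹

/-- Operator norm of a matrix in `SL(2,ℝ)` (acting on Euclidean `ℝ²`). -/
def SL2norm (A : SL2) : ℝ := ‖Matrix.toEuclideanCLM (𝕜 := ℝ) (A : Matrix (Fin 2) (Fin 2) ℝ)‖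

/-- Uniform hyperbolicity of the cocycle `(T, A)`. -/
def UniformlyHyperbolic {X : Type*} [TopologicalSpace X] (T : X ≃ₜ X) (A : X → SL2) : Prop :=
  ∃ C > 0, ∃ l > 1, ∀ (x : X) (n : ℤ), C * l ^ |n| ≤ SL2norm (cocIterZ T A n x)

/-- An invariant section of the cocycle `(T, A)`. -/
def IsInvariantSection {X : Type*} [TopologicalSpace X] (T : X ≃ₜ X) (A : X → SL2)
    (d : C(X, RP1)) : Prop :=
  ∀ x, SL2act (A x) (d x) = d (T x)

/-- An unstable section of the cocycle `(T, A)`. -/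
def IsUnstableSection {X : Type*} [TopologicalSpace X] (T : X ≃ₜ X) (A : X → SL2)
    (d : C(X, RP1)) : Prop :=
  IsInvariantSection T A d ∧
    ∃ C > 0, ∃ l > 1, ∀ (x : X) (n : ℕ) (v : Fin 2 → ℝ) (hv : v ≠ 0),
      Projectivization.mk ℝ v hv = d x →
        ‖((cocIterZ T A (-(n : ℤ)) x : Matrix (Fin 2) (Fin 2) ℝ).mulVec v)‖ ≤ C * (l ^ n)⁻¹ * ‖v‖

/-- A stable section of the cocycle `(T, A)`. -/
def IsStableSection {X : Type*} [TopologicalSpace X] (T : X ≃ₜ X) (A : X → SL2)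
    (d : C(X, RP1)) : Prop :=
  IsInvariantSection T A d ∧
    ∃ C > 0, ∃ l > 1, ∀ (x : X) (n : ℕ) (v : Fin 2 → ℝ) (hv : v ≠ 0),
      Projectivization.mk ℝ v hv = d x →
        ‖((cocIterN T A n x : Matrix (Fin 2) (Fin 2) ℝ).mulVec v)‖ ≤ C * (l ^ n)⁻¹ * ‖v‖


/-! If `ds x = du x`, a vector `v` spanning this line is contracted by `A^n(x)` because it
is stable, and the image, spanning `du (T^n x)`, is contracted by `A^{-n}(T^n x)` because it is
unstable; since this brings it back to `v`, `‖v‖ ≤ C λ^{-n} ‖v‖` for every `n`, which is absurd.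

For the homotopy, `span (a, b) ↦ conj z / z` with `z = a + b i` identifies `ℝP¹` with the unit
circle, and two maps into the circle that never agree are homotopic: rotate the first one
anticlockwise until it meets the second. -/

open Matrix

theorem SL2.inv_mulVec_mulVec (B : SL2) (v : Fin 2 → ℝ) :
    ((B⁻¹ : SL2) : Matrix (Fin 2) (Fin 2) ℝ) *ᵥ ((B : Matrix (Fin 2) (Fin 2) ℝ) *ᵥ v) = v := by
  rw [mulVec_mulVec]
  change ((B⁻¹ * B : SL2) : Matrix (Fin 2) (Fin 2) ℝ) *ᵥ v = v
  rw [inv_mul_cancel]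
  exact one_mulVec v

theorem SL2.mulVec_ne_zero (B : SL2) {v : Fin 2 → ℝ} (hv : v ≠ 0) :
    (B : Matrix (Fin 2) (Fin 2) ℝ) *ᵥ v ≠ 0 := fun h =>
  hv (by rw [← B.inv_mulVec_mulVec v, h, mulVec_zero])

theorem SL2act_mk (B : SL2) {v : Fin 2 → ℝ} (hv : v ≠ 0) :
    SL2act B (Projectivization.mk ℝ v hv) =
      Projectivization.mk ℝ ((B : Matrix (Fin 2) (Fin 2) ℝ) *ᵥ v) (B.mulVec_ne_zero hv) :=
  rfl

theorem SL2act_one (p : RP1) : SL2act 1 p = p := by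
  induction p using Projectivization.ind with
  | h v hv => simp only [SL2act_mk, Matrix.SpecialLinearGroup.coe_one, one_mulVec]

theorem SL2act_mul (B C : SL2) (p : RP1) : SL2act (B * C) p = SL2act B (SL2act C p) := by
  induction p using Projectivization.ind with
  | h v hv => simp only [SL2act_mk, Matrix.SpecialLinearGroup.coe_mul, mulVec_mulVec]

section Cocycle

variable {X : Type*} [TopologicalSpace X] {T : X ≃ₜ X} {A : X → SL2}

theorem IsInvariantSection.SL2act_cocIterN {d : C(X, RP1)} (hd : IsInvariantSection T A d)
    (n : ℕ) (x : X) : SL2act (cocIterN T A n x) (d x) = d (T^[n] x) := by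
  induction n with
  | zero => exact SL2act_one _
  | succ n ih =>
    rw [cocIterN, SL2act_mul, ih, hd, Function.iterate_succ_apply']

theorem cocIterZ_neg_natCast_iterate (T : X ≃ₜ X) (A : X → SL2) (n : ℕ) (x : X) :
    cocIterZ T A (-n) (T^[n] x) = (cocIterN T A n x)⁻¹ := by
  rcases n.eq_zero_or_pos with rfl | hn
  · simp [cocIterZ, cocIterN]
  · rw [cocIterZ, if_neg (by omega), neg_neg, Int.toNat_natCast,
      Function.LeftInverse.iterate T.symm_apply_apply]

theorem IsStableSection.apply_ne_of_isUnstableSection {ds du : C(X, RP1)}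
    (hds : IsStableSection T A ds) (hdu : IsUnstableSection T A du) (x : X) : ds x ≠ du x := by
  obtain ⟨-, Cs, -, ls, hls, hs⟩ := hds
  obtain ⟨hdu, Cu, hCu, lu, hlu, hu⟩ := hdu
  intro hx
  obtain ⟨n, hn⟩ := pow_unbounded_of_one_lt (Cs * Cu) (one_lt_mul hls.le hlu)
  set v := (ds x).rep
  have hv : v ≠ 0 := (ds x).rep_nonzero
  set B := cocIterN T A n x
  have hBv : Projectivization.mk ℝ ((B : Matrix (Fin 2) (Fin 2) ℝ) *ᵥ v)
      (B.mulVec_ne_zero hv) = du (T^[n] x) := by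
    rw [← SL2act_mk B hv, Projectivization.mk_rep, hx, hdu.SL2act_cocIterN]
  have hcontract := hs x n v hv (ds x).mk_rep
  have hexpand := hu _ n _ (B.mulVec_ne_zero hv) hBv
  rw [cocIterZ_neg_natCast_iterate, B.inv_mulVec_mulVec] at hexpand
  have hround_trip : (ls * lu) ^ n * ‖v‖ ≤ Cs * Cu * ‖v‖ :=
    calc (ls * lu) ^ n * ‖v‖
        ≤ (ls * lu) ^ n * (Cu * (lu ^ n)⁻¹ * (Cs * (ls ^ n)⁻¹ * ‖v‖)) := by
          gcongr
          exact hexpand.trans (mul_le_mul_of_nonneg_left hcontract (by positivity))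
      _ = Cs * Cu * ‖v‖ := by
          field_simp
          ring
  exact hn.not_ge (le_of_mul_le_mul_right hround_trip (norm_pos_iff.2 hv))

end Cocycle

namespace Circle

open Complex
open scoped ComplexOrder

theorem neg_coe_mem_slitPlane {c : Circle} (hc : c ≠ 1) : -(c : ℂ) ∈ slitPlane := by
  rw [mem_slitPlane_iff_not_le_zero, neg_nonpos]
  intro h
  refine hc (Circle.ext ?_)
  rw [eq_coe_norm_of_nonneg h, norm_coe, ofReal_one, coe_one]

theorem exp_pi : exp Real.pi = -1 :=
  Circle.ext (by rw [coe_exp, exp_pi_mul_I, coe_neg, coe_one])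

theorem exp_arg_neg_add_pi (c : Circle) : exp (arg (-(c : ℂ)) + Real.pi) = c := by
  rw [exp_add, exp_pi, ← coe_neg, exp_arg, neg_mul_neg, mul_one]

theorem homotopic_of_forall_ne {Y : Type*} [TopologicalSpace Y] {g h : C(Y, Circle)}
    (hne : ∀ y, g y ≠ h y) : g.Homotopic h := by
  -- the anticlockwise angle from `g y` to `h y`, in `(0, 2π)`
  set θ : Y → ℝ := fun y => arg (-((h y / g y : Circle) : ℂ)) + Real.pi
  have hθ : Continuous θ := by
    refine (continuous_iff_continuousAt.2 fun y => ?_).add continuous_const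
    exact (continuousAt_arg (neg_coe_mem_slitPlane (div_ne_one_of_ne (hne y).symm))).comp
      (f := fun y => -((h y / g y : Circle) : ℂ))
      (continuous_subtype_val.comp ((map_continuous h).div' (map_continuous g))).neg.continuousAt
  exact ⟨{ toFun := fun p => g p.2 * exp (p.1 * θ p.2)
           map_zero_left := fun y => by simp
           map_one_left := fun y => by
             simp only [Set.Icc.coe_one, one_mul, θ, exp_arg_neg_add_pi, mul_div_cancel] }⟩

end Circle

open ComplexConjugate

theorem Complex.exists_real_smul_eq_of_conj_div_self_eq {z w : ℂ} (hz : z ≠ 0) (hw : w ≠ 0)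
    (h : conj z / z = conj w / w) : ∃ t : ℝ, t • z = w := by
  rw [div_eq_div_iff hz hw] at h
  obtain ⟨r, hr⟩ := Complex.conj_eq_iff_real.1
    (show conj (conj z * w) = conj z * w by rw [map_mul, Complex.conj_conj, mul_comm, ← h])
  refine ⟨r / Complex.normSq z, ?_⟩
  have hz' : conj z ≠ 0 := (map_ne_zero _).2 hz
  rw [Complex.real_smul, Complex.ofReal_div, ← hr, ← Complex.mul_conj]
  field_simp

namespace RP1

open Complex

def toCircle : RP1 → Circle :=
  Projectivization.lift
    (fun v => Circle.ofConjDivSelf (basisOneI.equivFun.symm v)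
      ((LinearEquiv.map_ne_zero_iff _).2 v.2))
    (by
      rintro ⟨-, ha⟩ ⟨b, -⟩ t rfl
      have ht : (t : ℂ) ≠ 0 := ofReal_ne_zero.2 (by rintro rfl; simp at ha)
      ext1
      simp only [Circle.ofConjDivSelf_coe, map_smul, real_smul, map_mul, conj_ofReal]
      field_simp)

theorem continuous_toCircle : Continuous toCircle :=
  Continuous.quotient_lift (by
    have he : Continuous fun v : {v : Fin 2 → ℝ // v ≠ 0} => basisOneI.equivFun.symm v.1 :=
      (LinearMap.continuous_of_finiteDimensional _).comp continuous_subtype_val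
    exact ((continuous_conj.comp he).div he fun v =>
      (LinearEquiv.map_ne_zero_iff _).2 v.2).subtype_mk _) _

theorem toCircle_injective : Function.Injective toCircle := by
  intro p q hpq
  induction p using Projectivization.ind with | h v hv =>
  induction q using Projectivization.ind with | h w hw =>
  obtain ⟨t, ht⟩ := exists_real_smul_eq_of_conj_div_self_eq
    ((LinearEquiv.map_ne_zero_iff _).2 hv) ((LinearEquiv.map_ne_zero_iff _).2 hw)
    (congrArg Subtype.val hpq)
  rw [← map_smul] at ht
  exact ((Projectivization.mk_eq_mk_iff' ℝ _ _ hw hv).2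
    ⟨t, basisOneI.equivFun.symm.injective ht⟩).symm

theorem toCircle_surjective : Function.Surjective toCircle := by
  intro u
  set w := Circle.exp (-(arg u / 2)) with hw
  have hu : w⁻¹ / w = u := by
    rw [hw, Circle.exp_neg, inv_inv, ← Circle.exp_neg, ← Circle.exp_sub, sub_neg_eq_add,
      add_halves, Circle.exp_arg]
  refine ⟨Projectivization.mk ℝ (basisOneI.equivFun (w : ℂ))
    ((LinearEquiv.map_ne_zero_iff _).2 (Circle.coe_ne_zero w)), Circle.ext ?_⟩
  change conj _ / _ = (u : ℂ)
  rw [LinearEquiv.symm_apply_apply, ← hu, Circle.coe_div, Circle.coe_inv_eq_conj]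

instance : CompactSpace RP1 :=
  Function.Surjective.compactSpace
    (f := fun v : Metric.sphere (0 : Fin 2 → ℝ) 1 =>
      Projectivization.mk ℝ v.1 (ne_zero_of_mem_unit_sphere v))
    (continuous_quotient_mk'.comp (continuous_subtype_val.subtype_mk _)) (by
      intro p
      induction p using Projectivization.ind with | h v hv =>
      refine ⟨⟨‖v‖⁻¹ • v, mem_sphere_zero_iff_norm.2 (norm_smul_inv_norm hv)⟩, ?_⟩
      exact (Projectivization.mk_eq_mk_iff' ℝ _ _ _ hv).2 ⟨‖v‖⁻¹, rfl⟩)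

def toCircleHomeomorph : RP1 ≃ₜ Circle :=
  Continuous.homeoOfEquivCompactToT2
    (f := Equiv.ofBijective toCircle ⟨toCircle_injective, toCircle_surjective⟩)
    continuous_toCircle

theorem homotopic_of_forall_ne {Y : Type*} [TopologicalSpace Y] {g h : C(Y, RP1)}
    (hne : ∀ y, g y ≠ h y) : g.Homotopic h := by
  let Φ : C(RP1, Circle) := toCircleHomeomorph
  have := (ContinuousMap.Homotopic.refl (toCircleHomeomorph.symm : C(Circle, RP1))).comp
    (Circle.homotopic_of_forall_ne (g := Φ.comp g) (h := Φ.comp h)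
      fun y => toCircleHomeomorph.injective.ne (hne y))
  convert this using 1 <;> ext1 y <;> simp [Φ]

end RP1

theorem stable_unstable_ne_and_homotopic_general
    {X : Type*} [MetricSpace X]
    (T : X ≃ₜ X) (f : C(X, ℝ)) (E : ℝ)
    (ds du : C(X, RP1))
    (hds : IsStableSection T (schrodingerCocycle (⇑f) E) ds)
    (hdu : IsUnstableSection T (schrodingerCocycle (⇑f) E) du) :
    (∀ x, ds x ≠ du x) ∧ ds.Homotopic du := by
  have hne := hds.apply_ne_of_isUnstableSection hdu
  exact ⟨hne, RP1.homotopic_of_forall_ne hne⟩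

/-- If the Schrödinger cocycle `(T, A_E)` is uniformly hyperbolic, then any
stable section and any unstable section are everywhere distinct and are homotopic as maps
`X → ℝP¹`. -/
theorem stable_unstable_ne_and_homotopic
    {X : Type*} [MetricSpace X] [CompactSpace X] [Nonempty X]
    (T : X ≃ₜ X) (f : C(X, ℝ)) (E : ℝ)
    (hUH : UniformlyHyperbolic T (schrodingerCocycle (⇑f) E))
    (ds du : C(X, RP1))
    (hds : IsStableSection T (schrodingerCocycle (⇑f) E) ds)
    (hdu : IsUnstableSection T (schrodingerCocycle (⇑f) E) du) :
    (∀ x, ds x ≠ du x) ∧ ds.Homotopic du :=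
  stable_unstable_ne_and_homotopic_general T f E ds du hds hdu

end
end

section
/- Suppose d is an invariant section of (T, A) and g̃ is a family of lifts for A. Then: (i) for each x ∈ X, the quantity g̃(x, y) − y takes the same value for all y ∈ ℝ with π(y) = d(x), so the displacement function φ : X → ℝ is well defined and continuous; and (ii) for μ-almost every x ∈ X and every y ∈ ℝ with π(y) = d(x), lim_{n→∞} (G̃_{x,n}(y) − y)/n = ∫_X φ dμ. -/
open MeasureTheory Topology Filter

noncomputable section

instance : TopologicalSpace SL2 :=
  TopologicalSpace.induced (fun A : SL2 => (A : Matrix (Fin 2) (Fin 2) ℝ)) inferInstance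

/-- The covering map `π : ℝ → ℝP¹`, `π(y) = span (cos(πy), sin(πy))`. -/
def RP1proj (y : ℝ) : RP1 :=
  Projectivization.mk ℝ ![Real.cos (Real.pi * y), Real.sin (Real.pi * y)] (by
    intro h
    have h0 : Real.cos (Real.pi * y) = 0 := by
      have := congrFun h 0; simpa using this
    have h1 : Real.sin (Real.pi * y) = 0 := by
      have := congrFun h 1; simpa using this
    nlinarith [Real.sin_sq_add_cos_sq (Real.pi * y)])

/-- A (continuous, commuting with the deck transformation) family of lifts for the projective
action of `A`. -/
def IsLiftFamily {X : Type*} [TopologicalSpace X] (A : X → SL2) (g : X → ℝ → ℝ) : Prop :=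
  Continuous (fun p : X × ℝ => g p.1 p.2) ∧
    (∀ x y, RP1proj (g x y) = SL2act (A x) (RP1proj y)) ∧
    ∀ x y, g x (y + 1) = g x y + 1

/-- Iterates of a family of lifts: `G̃_{x,n} = g̃(T^{n-1}x, ·) ∘ ⋯ ∘ g̃(x, ·)`. -/
def liftIter {X : Type*} (T : X → X) (g : X → ℝ → ℝ) : ℕ → X → ℝ → ℝ
  | 0, _, y => y
  | n + 1, x, y => liftIter T g n (T x) (g x y)

/-!
Two lifts of `d x` differ by an integer and `g̃ x` commutes with integer translations, so the
displacement is well defined. It is continuous because every `d x` has a lift in the compact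
interval `[0, 1]` and `{(x, y) | π y = d x}` is closed, `ℝP¹` being Hausdorff (a line is determined
by the matrix of the orthogonal projection onto it). Along the orbit of a lift `y` of `d x`, the
lifts stay lifts of the section, so `G̃_{x,n}(y) - y` is the Birkhoff sum `∑_{k<n} φ(T^k x)` and
(ii) is Birkhoff's pointwise ergodic theorem for `φ`. The latter follows from Garsia's maximal
inequality: if `∫ f < 0`, the set where the Birkhoff sums of `f` are unbounded above is invariant,
and it cannot have full measure since the maximal inequality would then give `∫ f ≥ 0`.
-/

namespace Projectivization

open Matrix
open scoped LinearAlgebra.Projectivization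

variable {ι : Type*} [Fintype ι]

def orthogonalProjectionMatrix : ℙ ℝ (ι → ℝ) → Matrix ι ι ℝ :=
  Projectivization.lift (fun v => (v.1 ⬝ᵥ v.1)⁻¹ • vecMulVec v.1 v.1) (by
    rintro ⟨-, ha⟩ ⟨b, -⟩ t rfl
    have ht : t ≠ 0 := by rintro rfl; simp at ha
    simp only [smul_dotProduct, dotProduct_smul, smul_vecMulVec, vecMulVec_smul, smul_smul,
      smul_eq_mul]
    congr 1
    field_simp)

lemma orthogonalProjectionMatrix_mk_mulVec {v : ι → ℝ} (hv : v ≠ 0) (w : ι → ℝ) :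
    orthogonalProjectionMatrix (mk ℝ v hv) *ᵥ w = ((v ⬝ᵥ v)⁻¹ * (v ⬝ᵥ w)) • v := by
  simp [orthogonalProjectionMatrix, smul_mulVec, vecMulVec_mulVec, smul_smul]

lemma orthogonalProjectionMatrix_injective :
    Function.Injective (orthogonalProjectionMatrix (ι := ι)) := by
  intro p q h
  induction p using Projectivization.ind with | h v hv =>
  induction q using Projectivization.ind with | h w hw =>
  have hvv : v ⬝ᵥ v ≠ 0 := dotProduct_self_eq_zero.not.2 hv
  have h' := congrArg (· *ᵥ v) h
  simp only [orthogonalProjectionMatrix_mk_mulVec, inv_mul_cancel₀ hvv, one_smul] at h'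
  exact (mk_eq_mk_iff' ℝ v w hv hw).2 ⟨_, h'.symm⟩

end Projectivization

lemma continuous_orthogonalProjectionMatrix :
    Continuous
      (Projectivization.orthogonalProjectionMatrix : RP1 → Matrix (Fin 2) (Fin 2) ℝ) := by
  refine Continuous.quotient_lift ?_ _
  have hv : Continuous fun v : {v : Fin 2 → ℝ // v ≠ 0} => v.1 := continuous_subtype_val
  exact ((hv.dotProduct hv).inv₀ fun v => dotProduct_self_eq_zero.not.2 v.2).smul
    (hv.matrix_vecMulVec hv)

instance : T2Space RP1 :=
  .of_injective_continuous Projectivization.orthogonalProjectionMatrix_injective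
    continuous_orthogonalProjectionMatrix

section CoveringMap

open Real

lemma cos_sin_ne_zero (θ : ℝ) : ![cos θ, sin θ] ≠ 0 := by
  intro h
  have h0 : cos θ = 0 := by simpa using congrFun h 0
  have h1 : sin θ = 0 := by simpa using congrFun h 1
  simpa [h0, h1] using sin_sq_add_cos_sq θ

lemma continuous_RP1proj : Continuous RP1proj :=
  continuous_quotient_mk'.comp
    ((by fun_prop : Continuous fun y : ℝ => ![cos (π * y), sin (π * y)]).subtype_mk
      fun y => cos_sin_ne_zero (π * y))

lemma RP1proj_periodic : Function.Periodic RP1proj 1 := fun y => by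
  refine (Projectivization.mk_eq_mk_iff' ℝ _ _ _ _).2 ⟨-1, ?_⟩
  ext i
  fin_cases i <;> simp [mul_add, cos_add_pi, sin_add_pi]

lemma exists_int_eq_add_of_RP1proj_eq {y y' : ℝ} (h : RP1proj y = RP1proj y') :
    ∃ k : ℤ, y' = y + k := by
  obtain ⟨a, ha⟩ := (Projectivization.mk_eq_mk_iff' ℝ _ _ _ _).1 h
  have h0 : a * cos (π * y') = cos (π * y) := by simpa using congrFun ha 0
  have h1 : a * sin (π * y') = sin (π * y) := by simpa using congrFun ha 1
  have hs : sin (π * y' - π * y) = 0 := by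
    rw [sin_sub, ← h0, ← h1]; ring
  obtain ⟨k, hk⟩ := sin_eq_zero_iff.1 hs
  refine ⟨k, mul_left_cancel₀ pi_ne_zero ?_⟩
  linear_combination -hk

lemma RP1proj_surjective : Function.Surjective RP1proj := by
  intro p
  induction p using Projectivization.ind with | h v hv =>
  set z : ℂ := ⟨v 0, v 1⟩
  have hz : z ≠ 0 := fun h => hv <| by
    ext i
    fin_cases i <;> simp_all [Complex.ext_iff, z]
  refine ⟨z.arg / π, (Projectivization.mk_eq_mk_iff' ℝ _ _ _ _).2 ⟨‖z‖⁻¹, ?_⟩⟩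
  have hπ : π * (z.arg / π) = z.arg := by field_simp
  ext i
  fin_cases i
  · simp [hπ, Complex.cos_arg hz, inv_mul_eq_div, z]
  · simp [hπ, Complex.sin_arg, inv_mul_eq_div, z]

end CoveringMap

namespace IsLiftFamily

variable {X : Type*} [TopologicalSpace X] {A : X → SL2} {g : X → ℝ → ℝ}

lemma map_add_int (hg : IsLiftFamily A g) (x : X) (y : ℝ) (k : ℤ) : g x (y + k) = g x y + k :=
  AddConstMapClass.map_add_int (⟨g x, hg.2.2 x⟩ : AddConstMap ℝ ℝ 1 1) y k

lemma sub_eq_sub_of_RP1proj_eq (hg : IsLiftFamily A g) {x : X} {y y' : ℝ}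
    (h : RP1proj y = RP1proj y') : g x y - y = g x y' - y' := by
  obtain ⟨k, rfl⟩ := exists_int_eq_add_of_RP1proj_eq h
  rw [hg.map_add_int]
  ring

end IsLiftFamily

lemma continuous_of_eq_on_isClosed {X K Y : Type*} [TopologicalSpace X] [TopologicalSpace K]
    [CompactSpace K] [TopologicalSpace Y] {Z : Set (X × K)} (hZ : IsClosed Z)
    (hZ_fst : ∀ x, ∃ k, (x, k) ∈ Z) {h : X × K → Y} (hh : Continuous h) {φ : X → Y}
    (hφ : ∀ p ∈ Z, φ p.1 = h p) : Continuous φ := by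
  refine continuous_iff_isClosed.2 fun F hF => ?_
  have : φ ⁻¹' F = Prod.fst '' (Z ∩ h ⁻¹' F) := by
    ext x
    constructor
    · intro hx
      obtain ⟨k, hk⟩ := hZ_fst x
      exact ⟨(x, k), ⟨hk, by simpa [← hφ _ hk] using hx⟩, rfl⟩
    · rintro ⟨p, ⟨hpZ, hpF⟩, rfl⟩
      simpa [Set.mem_preimage, hφ p hpZ] using hpF
  rw [this]
  exact isClosedMap_fst_of_compactSpace _ (hZ.inter (hF.preimage hh))

section MaximalErgodic

variable {X : Type*} {T : X → X} {f : X → ℝ}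

/-- `birkhoffSumMax T f n x = max_{k ≤ n} birkhoffSum T f k x`. -/
def birkhoffSumMax (T : X → X) (f : X → ℝ) : ℕ → X → ℝ
  | 0 => 0
  | n + 1 => fun x => max 0 (f x + birkhoffSumMax T f n (T x))

lemma birkhoffSumMax_nonneg : ∀ n x, 0 ≤ birkhoffSumMax T f n x
  | 0, _ => le_rfl
  | _ + 1, _ => le_max_left _ _

lemma birkhoffSumMax_le_succ : ∀ n x, birkhoffSumMax T f n x ≤ birkhoffSumMax T f (n + 1) x
  | 0, x => birkhoffSumMax_nonneg 1 x
  | n + 1, x => max_le_max le_rfl (add_le_add_right (birkhoffSumMax_le_succ n (T x)) _)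

lemma monotone_birkhoffSumMax : Monotone (birkhoffSumMax T f) :=
  monotone_nat_of_le_succ fun n x => birkhoffSumMax_le_succ n x

lemma birkhoffSum_le_birkhoffSumMax : ∀ n x, birkhoffSum T f n x ≤ birkhoffSumMax T f n x
  | 0, x => by simp [birkhoffSumMax]
  | n + 1, x => by
    rw [birkhoffSum_succ']
    exact le_max_of_le_right (add_le_add_right (birkhoffSum_le_birkhoffSumMax n (T x)) _)

lemma birkhoffSumMax_sub_birkhoffSumMax_comp_le {n : ℕ} {x : X}
    (hx : 0 < birkhoffSumMax T f n x) :
    birkhoffSumMax T f n x - birkhoffSumMax T f n (T x) ≤ f x := by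
  cases n with
  | zero => exact absurd hx (lt_irrefl 0)
  | succ n =>
    have hpos : 0 < f x + birkhoffSumMax T f n (T x) := by
      simpa [birkhoffSumMax] using hx
    have := birkhoffSumMax_le_succ (T := T) (f := f) n (T x)
    simp only [birkhoffSumMax, max_eq_right hpos.le] at this ⊢
    linarith

variable [MeasurableSpace X] {μ : Measure X}

lemma measurable_birkhoffSumMax (hT : Measurable T) (hf : Measurable f) :
    ∀ n, Measurable (birkhoffSumMax T f n)
  | 0 => measurable_const
  | n + 1 => measurable_const.max (hf.add ((measurable_birkhoffSumMax hT hf n).comp hT))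

lemma integrable_birkhoffSumMax (hT : MeasurePreserving T μ μ) (hf : Integrable f μ) :
    ∀ n, Integrable (birkhoffSumMax T f n) μ
  | 0 => integrable_zero _ _ _
  | n + 1 => (integrable_zero _ _ _).sup
      (hf.add (hT.integrable_comp_of_integrable (integrable_birkhoffSumMax hT hf n)))

/-- The maximal ergodic theorem, in Garsia's form. -/
theorem MeasureTheory.MeasurePreserving.setIntegral_birkhoffSumMax_pos_nonneg
    (hT : MeasurePreserving T μ μ) (hf : Measurable f) (hfi : Integrable f μ) (n : ℕ) :
    0 ≤ ∫ x in {x | 0 < birkhoffSumMax T f n x}, f x ∂μ := by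
  set M := birkhoffSumMax T f n
  set E := {x | 0 < M x}
  have hMm : Measurable M := measurable_birkhoffSumMax hT.measurable hf n
  have hE : MeasurableSet E := measurableSet_lt measurable_const hMm
  have hMi : Integrable M μ := integrable_birkhoffSumMax hT hfi n
  have hMTi : Integrable (M ∘ T) μ := hT.integrable_comp_of_integrable hMi
  have hM_comp : ∫ x, M (T x) ∂μ = ∫ x, M x ∂μ := by
    rw [← integral_map hT.measurable.aemeasurable (hT.map_eq ▸ hMm.aestronglyMeasurable),
      hT.map_eq]
  have hM_on : ∫ x in E, M x ∂μ = ∫ x, M x ∂μ :=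
    setIntegral_eq_integral_of_forall_compl_eq_zero fun x hx =>
      le_antisymm (not_lt.1 hx) (birkhoffSumMax_nonneg n x)
  have hMT_on : ∫ x in E, M (T x) ∂μ ≤ ∫ x, M (T x) ∂μ :=
    setIntegral_le_integral hMTi (.of_forall fun x => birkhoffSumMax_nonneg n (T x))
  calc 0 ≤ ∫ x in E, M x ∂μ - ∫ x in E, M (T x) ∂μ := by linarith
    _ = ∫ x in E, (M x - M (T x)) ∂μ := (integral_sub hMi.integrableOn hMTi.integrableOn).symm
    _ ≤ ∫ x in E, f x ∂μ :=
        setIntegral_mono_on (hMi.sub hMTi).integrableOn hfi.integrableOn hE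
          fun x hx => birkhoffSumMax_sub_birkhoffSumMax_comp_le hx

theorem MeasureTheory.MeasurePreserving.setIntegral_iUnion_birkhoffSumMax_pos_nonneg
    (hT : MeasurePreserving T μ μ) (hf : Measurable f) (hfi : Integrable f μ) :
    0 ≤ ∫ x in ⋃ n, {x | 0 < birkhoffSumMax T f n x}, f x ∂μ :=
  ge_of_tendsto'
    (tendsto_setIntegral_of_monotone
      (fun n => measurableSet_lt measurable_const (measurable_birkhoffSumMax hT.measurable hf n))
      (fun _ _ hmn _ hx => hx.trans_le (monotone_birkhoffSumMax hmn _)) hfi.integrableOn)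
    (hT.setIntegral_birkhoffSumMax_pos_nonneg hf hfi)

end MaximalErgodic

section Birkhoff

variable {X : Type*} {T : X → X} {f : X → ℝ}

lemma bddAbove_range_birkhoffSum_apply_iff (x : X) :
    BddAbove (Set.range fun n => birkhoffSum T f n (T x)) ↔
      BddAbove (Set.range fun n => birkhoffSum T f n x) := by
  constructor
  · rintro ⟨K, hK⟩
    refine ⟨max 0 (f x + K), Set.forall_mem_range.2 fun n => ?_⟩
    cases n with
    | zero => simp [birkhoffSum_zero]
    | succ n =>
      rw [birkhoffSum_succ']
      exact le_max_of_le_right (add_le_add_right (hK ⟨n, rfl⟩) _)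
  · rintro ⟨K, hK⟩
    refine ⟨K - f x, Set.forall_mem_range.2 fun n => ?_⟩
    have : birkhoffSum T f (n + 1) x ≤ K := hK ⟨n + 1, rfl⟩
    rw [birkhoffSum_succ'] at this
    linarith

variable [MeasurableSpace X] {μ : Measure X}

theorem Ergodic.ae_bddAbove_range_birkhoffSum (hT : Ergodic T μ) (hf : Measurable f)
    (hfi : Integrable f μ) (hneg : ∫ x, f x ∂μ < 0) :
    ∀ᵐ x ∂μ, BddAbove (Set.range fun n => birkhoffSum T f n x) := by
  set F := {x | ¬ BddAbove (Set.range fun n => birkhoffSum T f n x)}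
  have hF : MeasurableSet F := (measurableSet_bddAbove_range fun n =>
    (Finset.measurable_sum _ fun k _ => hf.comp (hT.measurable.iterate k))).compl
  have hF_inv : T ⁻¹' F = F := by
    ext x
    simp only [F, Set.mem_preimage, Set.mem_ofPred_eq, bddAbove_range_birkhoffSum_apply_iff]
  rcases hT.ae_empty_or_univ hF hF_inv with hF_null | hF_full
  · filter_upwards [measure_eq_zero_iff_ae_notMem.1 (ae_eq_empty.1 hF_null)] with x hx
    simpa [F] using hx
  · set E := ⋃ n, {x | 0 < birkhoffSumMax T f n x}
    have hFE : F ⊆ E := fun x hx => by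
      obtain ⟨_, ⟨n, rfl⟩, hn⟩ := not_bddAbove_iff.1 hx 0
      exact Set.mem_iUnion.2 ⟨n, hn.trans_le (birkhoffSum_le_birkhoffSumMax n x)⟩
    have hE : E =ᵐ[μ] Set.univ :=
      ae_eq_univ.2 (measure_mono_null (Set.compl_subset_compl.2 hFE) (ae_eq_univ.1 hF_full))
    have := hT.toMeasurePreserving.setIntegral_iUnion_birkhoffSumMax_pos_nonneg hf hfi
    rw [setIntegral_congr_set hE, setIntegral_univ] at this
    exact absurd hneg this.not_gt

variable [IsProbabilityMeasure μ]

theorem Ergodic.ae_eventually_birkhoffAverage_lt (hT : Ergodic T μ) (hf : Measurable f)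
    (hfi : Integrable f μ) {b : ℝ} (hb : ∫ x, f x ∂μ < b) :
    ∀ᵐ x ∂μ, ∀ᶠ n in atTop, birkhoffAverage ℝ T f n x < b := by
  obtain ⟨c, hfc, hcb⟩ := exists_between hb
  have hsub : ∫ x, (f x - c) ∂μ < 0 := by
    rw [integral_sub hfi (integrable_const c)]
    simpa using hfc
  filter_upwards [hT.ae_bddAbove_range_birkhoffSum (hf.sub_const c)
    (hfi.sub (integrable_const c)) hsub] with x ⟨K, hK⟩
  have hS : ∀ n : ℕ, birkhoffSum T f n x ≤ n * c + K := fun n => by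
    have hsum : birkhoffSum T (fun y => f y - c) n x = birkhoffSum T f n x - n * c := by
      simp [birkhoffSum, Finset.sum_sub_distrib]
    have hn : birkhoffSum T (fun y => f y - c) n x ≤ K := hK ⟨n, rfl⟩
    linarith
  have hK_div : Tendsto (fun n : ℕ => c + K / n) atTop (𝓝 c) := by
    simpa using tendsto_const_nhds.add (tendsto_const_div_atTop_nhds_zero_nat K)
  filter_upwards [hK_div.eventually (gt_mem_nhds hcb), eventually_gt_atTop 0] with n hn hn0
  have hn0' : (0 : ℝ) < n := Nat.cast_pos.2 hn0
  calc birkhoffAverage ℝ T f n x = birkhoffSum T f n x / n := by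
        rw [birkhoffAverage, smul_eq_mul, inv_mul_eq_div]
    _ ≤ c + K / n := by
        rw [div_le_iff₀ hn0', add_mul, div_mul_cancel₀ _ hn0'.ne']
        linarith [hS n]
    _ < b := hn

theorem Ergodic.ae_tendsto_birkhoffAverage (hT : Ergodic T μ) (hf : Measurable f)
    (hfi : Integrable f μ) :
    ∀ᵐ x ∂μ, Tendsto (fun n => birkhoffAverage ℝ T f n x) atTop (𝓝 (∫ x, f x ∂μ)) := by
  have h_upper : ∀ᵐ x ∂μ, ∀ q : ℚ, ∫ x, f x ∂μ < q →
      ∀ᶠ n in atTop, birkhoffAverage ℝ T f n x < q := by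
    refine ae_all_iff.2 fun q => ?_
    by_cases hq : ∫ x, f x ∂μ < q
    · exact (hT.ae_eventually_birkhoffAverage_lt hf hfi hq).mono fun x hx _ => hx
    · exact .of_forall fun x h => absurd h hq
  have h_lower : ∀ᵐ x ∂μ, ∀ q : ℚ, (q : ℝ) < ∫ x, f x ∂μ →
      ∀ᶠ n in atTop, (q : ℝ) < birkhoffAverage ℝ T f n x := by
    refine ae_all_iff.2 fun q => ?_
    by_cases hq : (q : ℝ) < ∫ x, f x ∂μ
    · have hq' : ∫ x, (-f) x ∂μ < -q := by simpa [integral_neg] using hq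
      refine (hT.ae_eventually_birkhoffAverage_lt hf.neg hfi.neg hq').mono fun x hx _ => ?_
      simpa [birkhoffAverage_neg] using hx
    · exact .of_forall fun x h => absurd h hq
  filter_upwards [h_upper, h_lower] with x hx_upper hx_lower
  refine tendsto_order.2 ⟨fun a ha => ?_, fun b hb => ?_⟩
  · obtain ⟨q, haq, hq⟩ := exists_rat_btwn ha
    exact (hx_lower q hq).mono fun n hn => haq.trans hn
  · obtain ⟨q, hq, hqb⟩ := exists_rat_btwn hb
    exact (hx_upper q hq).mono fun n hn => hn.trans hqb

end Birkhoff

section Displacement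

variable {X : Type*} [TopologicalSpace X]

def displacement (d : C(X, RP1)) (g : X → ℝ → ℝ) (x : X) : ℝ :=
  g x (RP1proj_surjective (d x)).choose - (RP1proj_surjective (d x)).choose

variable {A : X → SL2} {d : C(X, RP1)} {g : X → ℝ → ℝ}

lemma displacement_eq (hg : IsLiftFamily A g) {x : X} {y : ℝ} (hy : RP1proj y = d x) :
    displacement d g x = g x y - y :=
  hg.sub_eq_sub_of_RP1proj_eq ((RP1proj_surjective (d x)).choose_spec.trans hy.symm)

lemma continuous_displacement (hg : IsLiftFamily A g) : Continuous (displacement d g) := by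
  refine continuous_of_eq_on_isClosed (K := Set.Icc (0 : ℝ) 1)
    (Z := {p | RP1proj p.2 = d p.1}) (h := fun p => g p.1 p.2 - p.2) ?_ ?_ ?_
    fun p hp => displacement_eq hg hp
  · exact isClosed_eq (continuous_RP1proj.comp (continuous_subtype_val.comp continuous_snd))
      (d.continuous.comp continuous_fst)
  · intro x
    obtain ⟨y, hy⟩ := RP1proj_surjective (d x)
    obtain ⟨y', hy', hyy'⟩ := RP1proj_periodic.exists_mem_Ico₀ one_pos y
    exact ⟨⟨y', Set.Ico_subset_Icc_self hy'⟩, hyy'.symm.trans hy⟩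
  · exact (hg.1.comp (continuous_fst.prodMk (continuous_subtype_val.comp continuous_snd))).sub
      (continuous_subtype_val.comp continuous_snd)

lemma liftIter_eq_add_birkhoffSum {T : X ≃ₜ X} (hd : IsInvariantSection T A d)
    (hg : IsLiftFamily A g) (n : ℕ) {x : X} {y : ℝ} (hy : RP1proj y = d x) :
    liftIter T g n x y = y + birkhoffSum T (displacement d g) n x := by
  induction n generalizing x y with
  | zero => simp [liftIter, birkhoffSum_zero]
  | succ n ih =>
    have hTy : RP1proj (g x y) = d (T x) := by rw [hg.2.1, hy, hd x]
    rw [liftIter, ih hTy, birkhoffSum_succ', displacement_eq hg hy]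
    ring

end Displacement

theorem displacement_well_defined_and_ae_limit_general
    {X : Type*} [MetricSpace X] [CompactSpace X]
    [MeasurableSpace X] [BorelSpace X]
    (T : X ≃ₜ X) (μ : Measure X) [IsProbabilityMeasure μ] (hT : Ergodic (⇑T) μ)
    (A : X → SL2)
    (d : C(X, RP1)) (hd : IsInvariantSection T A d)
    (g : X → ℝ → ℝ) (hg : IsLiftFamily A g) :
    (∀ (x : X) (y y' : ℝ), RP1proj y = d x → RP1proj y' = d x → g x y - y = g x y' - y') ∧
      ∃ φ : X → ℝ, Continuous φ ∧ (∀ x y, RP1proj y = d x → φ x = g x y - y) ∧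
        ∀ᵐ x ∂μ, ∀ y : ℝ, RP1proj y = d x →
          Tendsto (fun n : ℕ => (liftIter (⇑T) g n x y - y) / n) atTop (𝓝 (∫ z, φ z ∂μ)) := by
  have hφ : Continuous (displacement d g) := continuous_displacement hg
  refine ⟨fun x y y' hy hy' => hg.sub_eq_sub_of_RP1proj_eq (hy.trans hy'.symm),
    displacement d g, hφ, fun x y hy => displacement_eq hg hy, ?_⟩
  filter_upwards [hT.ae_tendsto_birkhoffAverage hφ.measurable
    (hφ.integrable_of_hasCompactSupport (.of_compactSpace _))] with x hx y hy
  refine hx.congr fun n => ?_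
  rw [birkhoffAverage, liftIter_eq_add_birkhoffSum hd hg n hy, add_sub_cancel_left, smul_eq_mul,
    inv_mul_eq_div]

/-- Given an invariant section `d` of `(T, A)` and a family of lifts `g̃` for
`A`, the displacement `g̃(x,y) - y` is independent of the choice of lift `y` of `d(x)`, so the
displacement function `φ` is well defined and continuous; moreover for `μ`-a.e. `x` and every
lift `y` of `d(x)`, `(G̃_{x,n}(y) - y)/n → ∫ φ dμ`. -/
theorem displacement_well_defined_and_ae_limit
    {X : Type*} [MetricSpace X] [CompactSpace X]
    [MeasurableSpace X] [BorelSpace X]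
    (T : X ≃ₜ X) (μ : Measure X) [IsProbabilityMeasure μ] (hT : Ergodic (⇑T) μ)
    (A : X → SL2) (hA : Continuous A)
    (d : C(X, RP1)) (hd : IsInvariantSection T A d)
    (g : X → ℝ → ℝ) (hg : IsLiftFamily A g) :
    (∀ (x : X) (y y' : ℝ), RP1proj y = d x → RP1proj y' = d x → g x y - y = g x y' - y') ∧
      ∃ φ : X → ℝ, Continuous φ ∧ (∀ x y, RP1proj y = d x → φ x = g x y - y) ∧
        ∀ᵐ x ∂μ, ∀ y : ℝ, RP1proj y = d x →
          Tendsto (fun n : ℕ => (liftIter (⇑T) g n x y - y) / n) atTop (𝓝 (∫ z, φ z ∂μ)) :=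
  displacement_well_defined_and_ae_limit_general T μ hT A d hd g hg

end
end

section
/- If A, B ⊆ ℝ are compact sets each containing at least two points, then A ⋆ B is a finite union of non-degenerate compact intervals: there exist N ≥ 1 and real numbers a_1, …, a_N, b_1, …, b_N with a_i < b_i for each i and A ⋆ B = ⋃_{i=1}^N [a_i, b_i]. -/
open scoped Pointwise

/-- The star operation on compact subsets of `ℝ`: `A ⋆ B = A + ch(B)` if
`diam(A) ≥ diam(B)`, and `A ⋆ B = ch(A) + B` otherwise, where `ch(A) = [inf A, sup A]`
and `diam(A) = sup A - inf A`. -/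
noncomputable def starOp (A B : Set ℝ) : Set ℝ :=
  if sSup B - sInf B ≤ sSup A - sInf A then A + Set.Icc (sInf B) (sSup B)
  else Set.Icc (sInf A) (sSup A) + B

/-- Key structural lemma: a nonempty compact set `S ⊆ ℝ` in which every point lies in a
closed subinterval of length `≥ L > 0` is a finite union of nondegenerate closed
intervals, provided its diameter is at most `n * L`. -/
lemma starOp_aux (L : ℝ) (hL : 0 < L) :
    ∀ n : ℕ, ∀ S : Set ℝ, IsCompact S → S.Nonempty →
    (∀ x ∈ S, ∃ p q, p ≤ x ∧ x ≤ q ∧ L ≤ q - p ∧ Set.Icc p q ⊆ S) →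
    sSup S - sInf S ≤ n * L →
    ∃ s : Finset (ℝ × ℝ), s.Nonempty ∧ (∀ p ∈ s, p.1 < p.2) ∧
      S = ⋃ p ∈ s, Set.Icc p.1 p.2 := by
  intro n
  induction n with
  | zero =>
    intro S hS hne hprop hdiam
    exfalso
    obtain ⟨x, hx⟩ := hne
    obtain ⟨p, q, hp, hq, hLpq, hsub⟩ := hprop x hx
    have hpq : p ≤ q := by linarith
    have hpS : p ∈ S := hsub ⟨le_refl p, hpq⟩
    have hqS : q ∈ S := hsub ⟨hpq, le_refl q⟩
    have h1 := le_csSup hS.bddAbove hqS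
    have h2 := csInf_le hS.bddBelow hpS
    simp only [Nat.cast_zero, zero_mul] at hdiam
    linarith
  | succ n ih =>
    intro S hS hne hprop hdiam
    set m := sInf S with hm_def
    set M := sSup S with hM_def
    have hmS : m ∈ S := hS.sInf_mem hne
    have hMS : M ∈ S := hS.sSup_mem hne
    by_cases hIcc : Set.Icc m M ⊆ S
    · have hSeq : S = Set.Icc m M :=
        Set.Subset.antisymm
          (fun x hx => ⟨csInf_le hS.bddBelow hx, le_csSup hS.bddAbove hx⟩) hIcc
    
      obtain ⟨p, q, hp, hq, hLpq, hsub⟩ := hprop m hmS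
      have hpq : p ≤ q := by linarith
      have hpS : p ∈ S := hsub ⟨le_refl p, hpq⟩
      have hqS : q ∈ S := hsub ⟨hpq, le_refl q⟩
      have h1 := le_csSup hS.bddAbove hqS
      have h2 := csInf_le hS.bddBelow hpS
      have hmM : m < M := by linarith
      refine ⟨{(m, M)}, ⟨(m, M), Finset.mem_singleton_self _⟩, ?_, ?_⟩
      · intro p hp
        rw [Finset.mem_singleton] at hp
        subst hp
        exact hmM
      · simp [hSeq]
    · rw [Set.not_subset] at hIcc
      obtain ⟨z, hz, hzS⟩ := hIcc
      set S₁ := S ∩ Set.Iic z with hS₁def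
      set S₂ := S ∩ Set.Ici z with hS₂def
      have hS₁c : IsCompact S₁ := hS.inter_right isClosed_Iic
      have hS₂c : IsCompact S₂ := hS.inter_right isClosed_Ici
      have hS₁ne : S₁.Nonempty := ⟨m, hmS, hz.1⟩
      have hS₂ne : S₂.Nonempty := ⟨M, hMS, hz.2⟩
      -- the interval property passes to each half
      have hprop₁ : ∀ x ∈ S₁, ∃ p q, p ≤ x ∧ x ≤ q ∧ L ≤ q - p ∧ Set.Icc p q ⊆ S₁ := by
        rintro x ⟨hxS, hxz⟩
        obtain ⟨p, q, hp, hq, hLpq, hsub⟩ := hprop x hxS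
        have hxz' : x < z := lt_of_le_of_ne hxz (fun h => hzS (h ▸ hxS))
        have hqz : q < z := by
          by_contra h
          push_neg at h
          exact hzS (hsub ⟨le_trans hp (le_of_lt hxz'), h⟩)
        exact ⟨p, q, hp, hq, hLpq, fun y hy => ⟨hsub hy, le_of_lt (lt_of_le_of_lt hy.2 hqz)⟩⟩
      have hprop₂ : ∀ x ∈ S₂, ∃ p q, p ≤ x ∧ x ≤ q ∧ L ≤ q - p ∧ Set.Icc p q ⊆ S₂ := by
        rintro x ⟨hxS, hxz⟩
        obtain ⟨p, q, hp, hq, hLpq, hsub⟩ := hprop x hxS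
        have hxz' : z < x := lt_of_le_of_ne hxz (fun h => hzS (h ▸ hxS))
        have hpz : z < p := by
          by_contra h
          push_neg at h
          exact hzS (hsub ⟨h, le_trans (le_of_lt hxz') hq⟩)
        exact ⟨p, q, hp, hq, hLpq, fun y hy => ⟨hsub hy, le_of_lt (lt_of_lt_of_le hpz hy.1)⟩⟩
      -- diameter bounds
      have hsub₁ : S₁ ⊆ S := Set.inter_subset_left
      have hsub₂ : S₂ ⊆ S := Set.inter_subset_left
      have hsup₁ : sSup S₁ ≤ z := csSup_le hS₁ne (fun x hx => hx.2)
      have hinf₂ : z ≤ sInf S₂ := le_csInf hS₂ne (fun x hx => hx.2)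
      have hinf₁ : m ≤ sInf S₁ := le_csInf hS₁ne (fun x hx => csInf_le hS.bddBelow hx.1)
      have hsup₂ : sSup S₂ ≤ M := csSup_le hS₂ne (fun x hx => le_csSup hS.bddAbove hx.1)
      -- each half has diameter ≥ L
      have hdiam₁L : L ≤ sSup S₁ - sInf S₁ := by
        obtain ⟨p, q, hp, hq, hLpq, hsub⟩ := hprop₁ m ⟨hmS, hz.1⟩
        have hpq : p ≤ q := by linarith
        have := le_csSup hS₁c.bddAbove (hsub ⟨hpq, le_refl q⟩)
        have := csInf_le hS₁c.bddBelow (hsub ⟨le_refl p, hpq⟩)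
        linarith
      have hdiam₂L : L ≤ sSup S₂ - sInf S₂ := by
        obtain ⟨p, q, hp, hq, hLpq, hsub⟩ := hprop₂ M ⟨hMS, hz.2⟩
        have hpq : p ≤ q := by linarith
        have := le_csSup hS₂c.bddAbove (hsub ⟨hpq, le_refl q⟩)
        have := csInf_le hS₂c.bddBelow (hsub ⟨le_refl p, hpq⟩)
        linarith
      have hdiam₁ : sSup S₁ - sInf S₁ ≤ n * L := by
        push_cast at hdiam ⊢
        linarith
      have hdiam₂ : sSup S₂ - sInf S₂ ≤ n * L := by
        push_cast at hdiam ⊢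
        linarith
      obtain ⟨s₁, hs₁ne, hs₁lt, hs₁eq⟩ := ih S₁ hS₁c hS₁ne hprop₁ hdiam₁
      obtain ⟨s₂, hs₂ne, hs₂lt, hs₂eq⟩ := ih S₂ hS₂c hS₂ne hprop₂ hdiam₂
      refine ⟨s₁ ∪ s₂, hs₁ne.mono Finset.subset_union_left, ?_, ?_⟩
      · intro p hp
        rcases Finset.mem_union.mp hp with h | h
        · exact hs₁lt p h
        · exact hs₂lt p h
      · have hSsplit : S = S₁ ∪ S₂ := by
          ext x
          constructor
          · intro hx
            rcases le_total x z with h | h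
            · exact Or.inl ⟨hx, h⟩
            · exact Or.inr ⟨hx, h⟩
          · rintro (⟨hx, _⟩ | ⟨hx, _⟩) <;> exact hx
        rw [hSsplit, hs₁eq, hs₂eq, Finset.set_biUnion_union]

/-- If `A` is compact and nonempty and `c < d`, then `A + [c,d]` is a finite
union of nondegenerate closed intervals. -/
lemma starOp_add_Icc (A : Set ℝ) (hA : IsCompact A) (hAne : A.Nonempty)
    (c d : ℝ) (hcd : c < d) :
    ∃ s : Finset (ℝ × ℝ), s.Nonempty ∧ (∀ p ∈ s, p.1 < p.2) ∧
      A + Set.Icc c d = ⋃ p ∈ s, Set.Icc p.1 p.2 := by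
  set L := d - c with hLdef
  have hL : 0 < L := by simp [hLdef]; linarith
  set S := A + Set.Icc c d with hSdef
  have hSc : IsCompact S := hA.add isCompact_Icc
  have hSne : S.Nonempty := hAne.add ⟨c, Set.left_mem_Icc.mpr (le_of_lt hcd)⟩
  have hprop : ∀ x ∈ S, ∃ p q, p ≤ x ∧ x ≤ q ∧ L ≤ q - p ∧ Set.Icc p q ⊆ S := by
    intro x hx
    rw [hSdef, Set.mem_add] at hx
    obtain ⟨a, ha, t, ht, hxt⟩ := hx
    refine ⟨a + c, a + d, by linarith [ht.1], by linarith [ht.2], by simp [hLdef], ?_⟩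
    intro y hy
    rw [hSdef, Set.mem_add]
    exact ⟨a, ha, y - a, ⟨by linarith [hy.1], by linarith [hy.2]⟩, by ring⟩
  obtain ⟨n, hn⟩ := exists_nat_ge ((sSup S - sInf S) / L)
  have hdiam : sSup S - sInf S ≤ n * L := by
    rw [div_le_iff₀ hL] at hn
    linarith
  exact starOp_aux L hL n S hSc hSne hprop hdiam

lemma starOp_finset_to_fin (S : Set ℝ)
    (h : ∃ s : Finset (ℝ × ℝ), s.Nonempty ∧ (∀ p ∈ s, p.1 < p.2) ∧
      S = ⋃ p ∈ s, Set.Icc p.1 p.2) :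
    ∃ (N : ℕ) (a b : Fin N → ℝ), 1 ≤ N ∧ (∀ i, a i < b i) ∧
      S = ⋃ i, Set.Icc (a i) (b i) := by
  obtain ⟨s, hne, hlt, heq⟩ := h
  refine ⟨s.card, fun i => ((s.equivFin.symm i : ℝ × ℝ)).1,
    fun i => ((s.equivFin.symm i : ℝ × ℝ)).2, Finset.card_pos.mpr hne, ?_, ?_⟩
  · intro i
    exact hlt _ (s.equivFin.symm i).2
  · rw [heq]
    ext x
    simp only [Set.mem_iUnion]
    constructor
    · rintro ⟨p, hp, hx⟩
      exact ⟨s.equivFin ⟨p, hp⟩, by simpa using hx⟩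
    · rintro ⟨i, hx⟩
      exact ⟨_, (s.equivFin.symm i).2, hx⟩

/-- If `A, B ⊆ ℝ` are compact sets with at least two points each, then
`A ⋆ B` is a finite union of non-degenerate compact intervals. -/
theorem starOp_finite_union_of_intervals
    (A B : Set ℝ) (hA : IsCompact A) (hB : IsCompact B)
    (hA2 : A.Nontrivial) (hB2 : B.Nontrivial) :
    ∃ (N : ℕ) (a b : Fin N → ℝ), 1 ≤ N ∧ (∀ i, a i < b i) ∧
      starOp A B = ⋃ i, Set.Icc (a i) (b i) := by
  obtain ⟨x, hxA, y, hyA, hxy⟩ := hA2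
  obtain ⟨u, huB, v, hvB, huv⟩ := hB2
  have hAinf_sup : sInf A < sSup A := by
    rcases lt_or_gt_of_ne hxy with h | h
    · calc sInf A ≤ x := csInf_le hA.bddBelow hxA
        _ < y := h
        _ ≤ sSup A := le_csSup hA.bddAbove hyA
    · calc sInf A ≤ y := csInf_le hA.bddBelow hyA
        _ < x := h
        _ ≤ sSup A := le_csSup hA.bddAbove hxA
  have hBinf_sup : sInf B < sSup B := by
    rcases lt_or_gt_of_ne huv with h | h
    · calc sInf B ≤ u := csInf_le hB.bddBelow huB
        _ < v := h
        _ ≤ sSup B := le_csSup hB.bddAbove hvB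
    · calc sInf B ≤ v := csInf_le hB.bddBelow hvB
        _ < u := h
        _ ≤ sSup B := le_csSup hB.bddAbove huB
  apply starOp_finset_to_fin
  unfold starOp
  split_ifs with hif
  · exact starOp_add_Icc A hA ⟨x, hxA⟩ _ _ hBinf_sup
  · rw [add_comm]
    exact starOp_add_Icc B hB ⟨u, huB⟩ _ _ hAinf_sup
end

section
/- If K ⊆ ℝ is a nonempty compact set and c < d are real numbers, then the Minkowski sum K + [c, d] is a finite union of non-degenerate compact intervals: there exist N ≥ 1 and real numbers a_1, …, a_N, b_1, …, b_N with a_i < b_i for each i and K + [c, d] = ⋃_{i=1}^N [a_i, b_i]. -/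
/-!
Cover `K` by finitely many closed balls of radius `(d - c) / 2` centred at points of `K`. Each
piece `L` of `K` cut out by such a ball has diameter at most `d - c`, so the translates of
`[c, d]` by the points of `L` overlap and `L + [c, d] = [min L + c, max L + d]`. Since Minkowski
sum distributes over unions, `K + [c, d]` is the union of these finitely many intervals.
-/

open Set Metric
open scoped Pointwise

theorem add_Icc_eq_Icc_of_isLeast_of_isGreatest {α : Type*} [AddCommGroup α] [LinearOrder α]
    [IsOrderedAddMonoid α] {K : Set α} {m M c d : α} (hm : IsLeast K m) (hM : IsGreatest K M)
    (hspread : M - m ≤ d - c) : K + Icc c d = Icc (m + c) (M + d) := by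
  ext s
  constructor
  · rintro ⟨y, hy, t, ht, rfl⟩
    exact ⟨add_le_add (hm.2 hy) ht.1, add_le_add (hM.2 hy) ht.2⟩
  · rintro ⟨hs₁, hs₂⟩
    rcases le_total s (m + d) with hs | hs
    · exact ⟨m, hm.1, s - m, ⟨le_sub_iff_add_le'.2 hs₁, sub_le_iff_le_add'.2 hs⟩,
        add_sub_cancel _ _⟩
    · refine ⟨M, hM.1, s - M, ⟨?_, sub_le_iff_le_add'.2 hs₂⟩, add_sub_cancel _ _⟩
      rw [le_sub_iff_add_le']
      calc M + c ≤ m + d := by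
            rw [sub_le_sub_iff] at hspread
            rwa [add_comm m d]
        _ ≤ s := hs

theorem IsCompact.exists_inter_closedBall_add_Icc_eq_Icc {K : Set ℝ} (hK : IsCompact K)
    {x c d : ℝ} (hx : x ∈ K) (hcd : c < d) :
    ∃ a b, a < b ∧ K ∩ closedBall x ((d - c) / 2) + Icc c d = Icc a b := by
  set L := K ∩ closedBall x ((d - c) / 2)
  have hL : IsCompact L := hK.inter_right isClosed_closedBall
  have hLne : L.Nonempty := ⟨x, hx, mem_closedBall_self (by linarith)⟩
  have hmin := hL.sInf_mem hLne
  have hmax := hL.sSup_mem hLne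
  have hspread : sSup L - sInf L ≤ d - c := by
    have hmin' := hmin.2
    have hmax' := hmax.2
    rw [Real.closedBall_eq_Icc] at hmin' hmax'
    linarith [hmin'.1, hmax'.2]
  refine ⟨sInf L + c, sSup L + d, ?_, add_Icc_eq_Icc_of_isLeast_of_isGreatest
    (hL.isLeast_sInf hLne) (hL.isGreatest_sSup hLne) hspread⟩
  linarith [csInf_le_csSup hLne hL.bddBelow hL.bddAbove]

theorem Set.add_eq_iUnion_inter_add {α ι : Type*} [Add α] {K : Set α} {U : ι → Set α}
    (hU : K ⊆ ⋃ i, U i) (S : Set α) : K + S = ⋃ i, K ∩ U i + S := by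
  conv_lhs => rw [← inter_eq_left.2 hU, inter_iUnion, iUnion_add]

/-- The Minkowski sum of a nonempty compact set `K ⊆ ℝ` and a
non-degenerate compact interval `[c, d]` is a finite union of non-degenerate compact
intervals. -/
theorem compact_add_Icc_finite_union_of_intervals
    (K : Set ℝ) (hK : IsCompact K) (hKne : K.Nonempty) (c d : ℝ) (hcd : c < d) :
    ∃ (N : ℕ) (a b : Fin N → ℝ), 1 ≤ N ∧ (∀ i, a i < b i) ∧
      K + Set.Icc c d = ⋃ i, Set.Icc (a i) (b i) := by
  obtain ⟨t, htK, ht, hcover⟩ := finite_cover_balls_of_compact hK (half_pos (sub_pos.2 hcd))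
  obtain ⟨N, e, rfl⟩ := ht.fin_embedding
  have heK : ∀ i, e i ∈ K := fun i => htK ⟨i, rfl⟩
  rw [biUnion_range] at hcover
  have hcover' : K ⊆ ⋃ i, closedBall (e i) ((d - c) / 2) :=
    hcover.trans (iUnion_mono fun i => ball_subset_closedBall)
  choose! a b hab hpiece using
    fun x (hx : x ∈ K) => hK.exists_inter_closedBall_add_Icc_eq_Icc hx hcd
  refine ⟨N, a ∘ e, b ∘ e, ?_, fun i => hab _ (heK i), ?_⟩
  · obtain ⟨y, hy⟩ := hKne
    obtain ⟨i, -⟩ := mem_iUnion.1 (hcover hy)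
    exact Fin.pos i
  · rw [add_eq_iUnion_inter_add hcover']
    exact iUnion_congr fun i => hpiece _ (heK i)
end

section
/- Let S ⊆ ℝ be a nonempty compact set and let a ≤ b be real numbers with diam(S) ≤ b − a. Then [a, b] + S = [a, b] + ch(S). -/
open scoped Pointwise

/-- If `S ⊆ ℝ` is nonempty and compact and `[a, b]` is an interval with
`diam(S) ≤ b - a`, then `[a, b] + S = [a, b] + ch(S)`, where `ch(S) = [inf S, sup S]`. -/
theorem Icc_add_eq_Icc_add_convexHull
    (S : Set ℝ) (hSne : S.Nonempty) (hS : IsCompact S)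
    (a b : ℝ) (hab : a ≤ b) (hdiam : sSup S - sInf S ≤ b - a) :
    Set.Icc a b + S = Set.Icc a b + Set.Icc (sInf S) (sSup S) := by
  have hbdd := hS.bddAbove
  have hbdd' := hS.bddBelow
  have hcd : sInf S ≤ sSup S := Real.sInf_le_sSup S hbdd' hbdd
  apply Set.Subset.antisymm
  · exact Set.add_subset_add_left (fun s hs => ⟨csInf_le hbdd' hs, le_csSup hbdd hs⟩)
  · rw [Set.Icc_add_Icc]
    rotate_left
    · exact hab
    · exact hcd
    intro t ht
    obtain ⟨ht1, ht2⟩ := ht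
    set A := S ∩ Set.Iic (t - a) with hA
    have hAne : A.Nonempty := ⟨sInf S, hS.sInf_mem hSne, by simp; linarith⟩
    have hAcomp : IsCompact A := hS.inter_right isClosed_Iic
    have hAbdd : BddAbove A := hAcomp.bddAbove
    set s := sSup A with hs
    have hsA : s ∈ A := hAcomp.sSup_mem hAne
    have hsS : s ∈ S := hsA.1
    have hsle : s ≤ t - a := hsA.2
    have hge : t - b ≤ s := by
      by_contra h
      push_neg at h
      have hsup : sSup S > t - a := by
        by_contra h'
        push_neg at h'
        have hmem : sSup S ∈ A := ⟨hS.sSup_mem hSne, h'⟩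
        have h1 := le_csSup hAbdd hmem
        linarith
      have hinf : sInf S ≤ s := csInf_le hbdd' hsS
      linarith
    have : t = (t - s) + s := by ring
    rw [this]
    exact Set.add_mem_add ⟨by linarith, by linarith⟩ hsS
end
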